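/- arXiv:math/0603620 — 6 statements merged into one kernel-verified Lean document; each statement's English description precedes it below -/
import Mathlib

section
/- Let d ≥ 2 and L > 0. The image of the snout map f(z) = ∫₀^L z(s) ds, as z ranges over all continuous maps z : [0,L] → ℝ^d with ‖z(s)‖ = 1 for all s ∈ [0,L], is exactly the closed ball of radius L centered at the origin in ℝ^d. That is, {∫₀^L z(s) ds | z : [0,L] → ℝ^d continuous, ‖z(s)‖ = 1 for all s} = Metric.closedBall 0 L. -/
open MeasureTheory

theorem exists_orth (d : ℕ) (hd : 2 ≤ d) (u : EuclideanSpace ℝ (Fin d)) :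
    ∃ v : EuclideanSpace ℝ (Fin d), ‖v‖ = 1 ∧ inner ℝ u v = (0:ℝ) := by
  have h2 : Module.finrank ℝ (ℝ ∙ u) ≤ 1 := by
    by_cases hu : u = 0
    · rw [hu, Submodule.span_zero_singleton, finrank_bot]; omega
    · rw [finrank_span_singleton hu]
  have hK : (ℝ ∙ u)ᗮ ≠ ⊥ := by
    intro h
    have h1 := Submodule.finrank_add_finrank_orthogonal (𝕜 := ℝ) (ℝ ∙ u)
    rw [h, finrank_bot] at h1
    simp [finrank_euclideanSpace_fin] at h1
    omega
  obtain ⟨v₀, hv₀K, hv₀⟩ := Submodule.exists_mem_ne_zero_of_ne_bot hK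
  refine ⟨‖v₀‖⁻¹ • v₀, ?_, ?_⟩
  · rw [norm_smul, norm_inv, norm_norm, inv_mul_cancel₀ (norm_ne_zero_iff.2 hv₀)]
  · have := (Submodule.mem_orthogonal _ _).1 hv₀K u (Submodule.mem_span_singleton_self u)
    rw [inner_smul_right, this, mul_zero]

theorem exists_t (L r : ℝ) (hL : 0 < L) (hr0 : 0 ≤ r) (hr : r < L) :
    ∃ t : ℝ, 0 < t ∧ L * Real.sin t = r * t := by
  set t₁ : ℝ := min 1 (Real.sqrt ((L - r) / L)) with ht₁def
  have hpos : 0 < t₁ := lt_min one_pos (Real.sqrt_pos.2 (div_pos (by linarith) hL))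
  have hle1 : t₁ ≤ 1 := min_le_left _ _
  have hsq : t₁ ^ 2 ≤ (L - r) / L := by
    calc t₁ ^ 2 ≤ (Real.sqrt ((L - r) / L)) ^ 2 := by
          apply pow_le_pow_left₀ hpos.le (min_le_right _ _)
      _ = (L - r) / L := Real.sq_sqrt (div_nonneg (by linarith) hL.le)
  have hsin := Real.sin_gt_sub_cube hpos
  have hg1 : 0 < L * Real.sin t₁ - r * t₁ := by
    have h' : t₁ ^ 2 * L ≤ L - r := (le_div_iff₀ hL).mp hsq
    nlinarith
  have hgpi : L * Real.sin Real.pi - r * Real.pi ≤ 0 := by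
    rw [Real.sin_pi]
    nlinarith [Real.pi_pos]
  have hcont : ContinuousOn (fun t => L * Real.sin t - r * t) (Set.Icc t₁ Real.pi) := by
    fun_prop
  have hab : t₁ ≤ Real.pi := hle1.trans (by nlinarith [Real.pi_gt_three])
  have := intermediate_value_Icc' hab hcont
  have h0 : (0:ℝ) ∈ Set.Icc (L * Real.sin Real.pi - r * Real.pi) (L * Real.sin t₁ - r * t₁) :=
    ⟨hgpi, hg1.le⟩
  obtain ⟨t, htmem, ht⟩ := this h0
  exact ⟨t, hpos.trans_le htmem.1, by linarith [ht, sub_eq_zero.mp ht]⟩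

/-- The image of the snout map `f(z) = ∫₀^L z(s) ds`, over all continuous
configurations `z : [0,L] → ℝ^d` with `‖z(s)‖ = 1`, is the closed ball of
radius `L` centered at the origin. -/
theorem snout_image_eq_closedBall (d : ℕ) (hd : 2 ≤ d) (L : ℝ) (hL : 0 < L) :
    {x : EuclideanSpace ℝ (Fin d) |
      ∃ z : ℝ → EuclideanSpace ℝ (Fin d),
        ContinuousOn z (Set.Icc 0 L) ∧
        (∀ s ∈ Set.Icc (0 : ℝ) L, ‖z s‖ = 1) ∧
        x = ∫ s in (0 : ℝ)..L, z s} = Metric.closedBall 0 L := by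
  ext x
  simp only [Set.mem_setOf_eq, Metric.mem_closedBall, dist_zero_right]
  constructor
  · rintro ⟨z, hzc, hz1, rfl⟩
    calc ‖∫ s in (0:ℝ)..L, z s‖ ≤ 1 * |L - 0| := by
          apply intervalIntegral.norm_integral_le_of_norm_le_const
          intro s hs
          rw [Set.uIoc_of_le hL.le] at hs
          exact (hz1 s ⟨hs.1.le, hs.2⟩).le
      _ = L := by rw [one_mul, sub_zero, abs_of_pos hL]
  · intro hx
    classical
    set u : EuclideanSpace ℝ (Fin d) :=
      if x = 0 then EuclideanSpace.single ⟨0, by omega⟩ 1 else ‖x‖⁻¹ • x with hudef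
    have hu : ‖u‖ = 1 := by
      rw [hudef]
      split_ifs with h
      · rw [EuclideanSpace.norm_single]; norm_num
      · rw [norm_smul, norm_inv, norm_norm, inv_mul_cancel₀ (norm_ne_zero_iff.2 h)]
    have hxu : ‖x‖ • u = x := by
      rw [hudef]
      split_ifs with h
      · rw [h]; simp
      · rw [smul_smul, mul_inv_cancel₀ (norm_ne_zero_iff.2 h), one_smul]
    rcases eq_or_lt_of_le hx with hxL | hxL
    · -- constant path
      refine ⟨fun _ => u, continuousOn_const, fun s _ => hu, ?_⟩
      rw [intervalIntegral.integral_const, sub_zero, ← hxL, hxu]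
    · -- arc path
      obtain ⟨v, hv, huv⟩ := exists_orth d hd u
      obtain ⟨t, ht0, ht⟩ := exists_t L ‖x‖ hL (norm_nonneg x) hxL
      set ω : ℝ := 2 * t / L with hωdef
      have hω : ω ≠ 0 := by positivity
      have hzc : Continuous (fun s => Real.cos (ω * s + -t) • u + Real.sin (ω * s + -t) • v) := by
        fun_prop
      refine ⟨fun s => Real.cos (ω * s + -t) • u + Real.sin (ω * s + -t) • v,
        hzc.continuousOn, fun s _ => ?_, ?_⟩
      · set c := Real.cos (ω * s + -t)
        set s' := Real.sin (ω * s + -t)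
        have hsq : ‖c • u + s' • v‖ ^ 2 = 1 := by
          rw [norm_add_sq_real, inner_smul_left, inner_smul_right, huv, norm_smul, norm_smul,
            hu, hv, mul_pow, mul_pow]
          simp only [Real.norm_eq_abs, sq_abs, mul_zero, mul_one, one_pow]
          have := Real.sin_sq_add_cos_sq (ω * s + -t)
          nlinarith [this]
        rw [← Real.sqrt_sq (norm_nonneg (c • u + s' • v)), hsq, Real.sqrt_one]
      · have hcos : (∫ s in (0:ℝ)..L, Real.cos (ω * s + -t)) = ‖x‖ := by
          rw [intervalIntegral.integral_comp_mul_add Real.cos hω (-t), integral_cos]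
          have hωL : ω * L = 2 * t := by rw [hωdef]; field_simp
          rw [mul_zero, zero_add, hωL, Real.sin_neg]
          have h1 : (2:ℝ) * t + -t = t := by ring
          rw [h1, smul_eq_mul]
          rw [hωdef]
          field_simp
          nlinarith [ht]
        have hsin : (∫ s in (0:ℝ)..L, Real.sin (ω * s + -t)) = 0 := by
          rw [intervalIntegral.integral_comp_mul_add Real.sin hω (-t), integral_sin]
          have hωL : ω * L = 2 * t := by rw [hωdef]; field_simp
          rw [mul_zero, zero_add, hωL, Real.cos_neg]
          have h1 : (2:ℝ) * t + -t = t := by ring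
          rw [h1, sub_self, smul_zero]
        rw [intervalIntegral.integral_add
            (((by fun_prop : Continuous fun s => Real.cos (ω * s + -t) • u)).intervalIntegrable 0 L)
            (((by fun_prop : Continuous fun s => Real.sin (ω * s + -t) • v)).intervalIntegrable 0 L),
          intervalIntegral.integral_smul_const, intervalIntegral.integral_smul_const,
          hcos, hsin, zero_smul, add_zero, hxu]
end

section
/- Let L > 0 and let z : [0,L] → ℝ^d be a continuous map with ‖z(s)‖ = 1 for all s ∈ [0,L]. Define the linear map M(z) : ℝ^d → ℝ^d by M(z)v = L·v − ∫₀^L ⟨z(s), v⟩ · z(s) ds. Then M(z) is invertible (bijective) if and only if z is not lined, i.e., if and only if there is no p ∈ ℝ^d with ‖p‖ = 1 such that z(s) ∈ {p, −p} for all s ∈ [0,L]. -/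
open MeasureTheory

/-- For a continuous configuration `z : [0,L] → ℝ^d` of unit vectors, the linear map
`M(z) v = L·v − ∫₀^L ⟪z s, v⟫ • z s ds` is bijective if and only if `z` is not lined,
i.e. there is no unit vector `p` with `z s ∈ {p, -p}` for all `s ∈ [0,L]`. -/
theorem Mz_bijective_iff_not_lined (d : ℕ) (L : ℝ) (hL : 0 < L)
    (z : ℝ → EuclideanSpace ℝ (Fin d)) (hz : ContinuousOn z (Set.Icc 0 L))
    (hnorm : ∀ s ∈ Set.Icc (0 : ℝ) L, ‖z s‖ = 1) :
    Function.Bijective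
        (fun v : EuclideanSpace ℝ (Fin d) =>
          L • v - ∫ s in (0 : ℝ)..L, (inner ℝ (z s) v : ℝ) • z s) ↔
      ¬ ∃ p : EuclideanSpace ℝ (Fin d), ‖p‖ = 1 ∧
          ∀ s ∈ Set.Icc (0 : ℝ) L, z s = p ∨ z s = -p := by
  have huIcc : Set.uIcc (0 : ℝ) L = Set.Icc 0 L := Set.uIcc_of_le hL.le
  have hzc : ContinuousOn z (Set.uIcc (0:ℝ) L) := huIcc ▸ hz
  have hint : ∀ v : EuclideanSpace ℝ (Fin d),
      IntervalIntegrable (fun s => (inner ℝ (z s) v : ℝ) • z s) volume 0 L :=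
    fun v => (((hzc.inner (𝕜 := ℝ) continuousOn_const)).smul hzc).intervalIntegrable
  set M : EuclideanSpace ℝ (Fin d) →ₗ[ℝ] EuclideanSpace ℝ (Fin d) :=
    { toFun := fun v => L • v - ∫ s in (0:ℝ)..L, (inner ℝ (z s) v : ℝ) • z s
      map_add' := by
        intro v w
        have h : (∫ s in (0:ℝ)..L, (inner ℝ (z s) (v + w) : ℝ) • z s)
            = (∫ s in (0:ℝ)..L, (inner ℝ (z s) v : ℝ) • z s)
              + ∫ s in (0:ℝ)..L, (inner ℝ (z s) w : ℝ) • z s := by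
          rw [← intervalIntegral.integral_add (hint v) (hint w)]
          apply intervalIntegral.integral_congr
          intro s _
          simp [inner_add_right, add_smul]
        simp only [h, smul_add]
        abel
      map_smul' := by
        intro c v
        have h : (∫ s in (0:ℝ)..L, (inner ℝ (z s) (c • v) : ℝ) • z s)
            = c • ∫ s in (0:ℝ)..L, (inner ℝ (z s) v : ℝ) • z s := by
          rw [← intervalIntegral.integral_smul]
          apply intervalIntegral.integral_congr
          intro s _
          beta_reduce
          rw [real_inner_smul_right, smul_smul]
        simp only [h, RingHom.id_apply, smul_sub]
        rw [smul_comm] } with hM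
  constructor
  · rintro hbij ⟨p, hp, hlin⟩
    have hMp : M p = 0 := by
      have hcongr : ∀ s ∈ Set.uIcc (0:ℝ) L, (inner ℝ (z s) p : ℝ) • z s = p := by
        intro s hs
        rcases hlin s (huIcc ▸ hs) with h | h
        · rw [h, real_inner_self_eq_norm_sq, hp]; simp
        · rw [h, inner_neg_left, real_inner_self_eq_norm_sq, hp]; simp
      have : (∫ s in (0:ℝ)..L, (inner ℝ (z s) p : ℝ) • z s)
          = ∫ _ in (0:ℝ)..L, p := intervalIntegral.integral_congr hcongr
      simp only [hM, LinearMap.coe_mk, AddHom.coe_mk, this,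
        intervalIntegral.integral_const, sub_zero, sub_self]
    have : p = 0 := by
      have h0 : M 0 = 0 := map_zero M
      exact hbij.injective (by simpa [hM] using hMp.trans h0.symm)
    rw [this] at hp
    simp at hp
  · intro hnl
    have hinj : Function.Injective M := by
      rw [← LinearMap.ker_eq_bot, LinearMap.ker_eq_bot']
      intro v hMv
      by_contra hv
      -- derive that z is lined with p = ‖v‖⁻¹ • v
      have hvn : (0:ℝ) < ‖v‖ := norm_pos_iff.mpr hv
      have hLv : L • v = ∫ s in (0:ℝ)..L, (inner ℝ (z s) v : ℝ) • z s := by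
        have := sub_eq_zero.mp hMv
        simpa [hM] using this
      -- take inner with v
      have h1 : L * ‖v‖^2 = ∫ s in (0:ℝ)..L, (inner ℝ (z s) v : ℝ)^2 := by
        have hcomm : (∫ s in (0:ℝ)..L, (inner ℝ v ((inner ℝ (z s) v : ℝ) • z s) : ℝ))
            = (inner ℝ v (∫ s in (0:ℝ)..L, (inner ℝ (z s) v : ℝ) • z s) : ℝ) :=
          (innerSL ℝ v).intervalIntegral_comp_comm (hint v)
        calc L * ‖v‖^2 = (inner ℝ v (L • v) : ℝ) := by
              rw [real_inner_smul_right, real_inner_self_eq_norm_sq]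
            _ = (inner ℝ v (∫ s in (0:ℝ)..L, (inner ℝ (z s) v : ℝ) • z s) : ℝ) := by rw [hLv]
            _ = ∫ s in (0:ℝ)..L, (inner ℝ v ((inner ℝ (z s) v : ℝ) • z s) : ℝ) := hcomm.symm
            _ = ∫ s in (0:ℝ)..L, (inner ℝ (z s) v : ℝ)^2 := by
              apply intervalIntegral.integral_congr
              intro s _
              beta_reduce
              rw [real_inner_smul_right, real_inner_comm]; ring
      -- the nonnegative continuous function g
      set g : ℝ → ℝ := fun s => ‖v‖^2 - (inner ℝ (z s) v : ℝ)^2 with hg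
      have hgc : ContinuousOn g (Set.Icc 0 L) := by
        apply continuousOn_const.sub
        exact ((hz.inner continuousOn_const).pow 2)
      have hgnn : ∀ s ∈ Set.Icc (0:ℝ) L, 0 ≤ g s := by
        intro s hs
        have hcs : |(inner ℝ (z s) v : ℝ)| ≤ ‖z s‖ * ‖v‖ := abs_real_inner_le_norm _ _
        rw [hnorm s hs, one_mul] at hcs
        have : (inner ℝ (z s) v : ℝ)^2 ≤ ‖v‖^2 := by
          rw [← sq_abs]
          exact pow_le_pow_left₀ (abs_nonneg _) hcs 2
        simpa [hg] using this
      have hgint : (∫ s in (0:ℝ)..L, g s) = 0 := by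
        have hi2 : IntervalIntegrable (fun s => (inner ℝ (z s) v : ℝ)^2) volume 0 L :=
          ((hzc.inner continuousOn_const).pow 2).intervalIntegrable
        rw [hg]
        rw [intervalIntegral.integral_sub intervalIntegrable_const hi2]
        rw [intervalIntegral.integral_const, ← h1]
        simp [mul_comm]
      have hgzero : ∀ s ∈ Set.Icc (0:ℝ) L, g s = 0 := by
        intro s hs
        by_contra hgs
        have hpos : 0 < g s := lt_of_le_of_ne (hgnn s hs) (Ne.symm hgs)
        have : 0 < ∫ s in (0:ℝ)..L, g s := by
          apply intervalIntegral.integral_pos hL hgc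
          · intro x hx
            exact hgnn x ⟨hx.1.le, hx.2⟩
          · exact ⟨s, hs, hpos⟩
        rw [hgint] at this
        exact lt_irrefl 0 this
      -- construct p
      refine hnl ⟨‖v‖⁻¹ • v, ?_, ?_⟩
      · rw [norm_smul, norm_inv, norm_norm]
        field_simp
      · intro s hs
        set p : EuclideanSpace ℝ (Fin d) := ‖v‖⁻¹ • v with hpdef
        have hpn : ‖p‖ = 1 := by
          rw [hpdef, norm_smul, norm_inv, norm_norm]; field_simp
        have hip2 : (inner ℝ (z s) p : ℝ)^2 = 1 := by
          have h0 : g s = 0 := hgzero s hs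
          have h2 : (inner ℝ (z s) v : ℝ)^2 = ‖v‖^2 := by
            simp only [hg] at h0
            linarith
          rw [hpdef, real_inner_smul_right, mul_pow, h2]
          field_simp
        rcases sq_eq_one_iff.mp hip2 with h | h
        · left
          exact (inner_eq_one_iff_of_norm_eq_one (hnorm s hs) hpn).mp h
        · right
          have h' : (inner ℝ (z s) (-p) : ℝ) = 1 := by
            rw [inner_neg_right, h]; ring
          have hnp : ‖(-p : EuclideanSpace ℝ (Fin d))‖ = 1 := by
            rw [norm_neg]; exact hpn
          exact (inner_eq_one_iff_of_norm_eq_one (hnorm s hs) hnp).mp h'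
    have : Function.Bijective M :=
      ⟨hinj, (LinearMap.injective_iff_surjective).mp hinj⟩
    exact this
end

section
/- Let d ≥ 2, let S = {x ∈ ℝ^d : ‖x‖ = 1} be the unit sphere, let L_p, L_q > 0, and let b ∈ ℝ^d satisfy |L_p − L_q| < ‖b‖ < L_p + L_q. Then the fiber {(p,q) ∈ S × S : L_p·p + L_q·q = b}, with the subspace topology from ℝ^d × ℝ^d, is homeomorphic to the unit sphere S^{d−2} of ℝ^{d−1}. -/
open scoped RealInnerProductSpace

noncomputable section

/-- Scaling homeomorphism between spheres. -/
def sphereScaleHomeo {V : Type*} [NormedAddCommGroup V] [NormedSpace ℝ V]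
    {r : ℝ} (hr : 0 < r) : Metric.sphere (0:V) r ≃ₜ Metric.sphere (0:V) 1 where
  toFun x := ⟨r⁻¹ • (x:V), by
    rw [mem_sphere_zero_iff_norm, norm_smul, norm_inv, Real.norm_eq_abs, abs_of_pos hr,
      mem_sphere_zero_iff_norm.mp x.2]
    field_simp⟩
  invFun y := ⟨r • (y:V), by
    rw [mem_sphere_zero_iff_norm, norm_smul, Real.norm_eq_abs, abs_of_pos hr,
      mem_sphere_zero_iff_norm.mp y.2, mul_one]⟩
  left_inv x := by ext; simp [smul_smul, hr.ne']
  right_inv y := by ext; simp [smul_smul, hr.ne']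
  continuous_toFun := by exact (continuous_const.smul continuous_subtype_val).subtype_mk _
  continuous_invFun := by exact (continuous_const.smul continuous_subtype_val).subtype_mk _

/-- Sphere homeomorphism induced by a linear isometry equivalence. -/
def sphereLIHomeo {V W : Type*} [NormedAddCommGroup V] [NormedAddCommGroup W]
    [NormedSpace ℝ V] [NormedSpace ℝ W] (e : V ≃ₗᵢ[ℝ] W) (r : ℝ) :
    Metric.sphere (0:V) r ≃ₜ Metric.sphere (0:W) r where
  toFun x := ⟨e x, by
    rw [mem_sphere_zero_iff_norm, e.norm_map]
    exact mem_sphere_zero_iff_norm.mp x.2⟩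
  invFun y := ⟨e.symm y, by
    rw [mem_sphere_zero_iff_norm, e.symm.norm_map]
    exact mem_sphere_zero_iff_norm.mp y.2⟩
  left_inv x := by ext; simp
  right_inv y := by ext; simp
  continuous_toFun := by exact (e.continuous.comp continuous_subtype_val).subtype_mk _
  continuous_invFun := by exact (e.symm.continuous.comp continuous_subtype_val).subtype_mk _

set_option maxHeartbeats 2000000 in
/-- For `|L_p − L_q| < ‖b‖ < L_p + L_q`, the fiber
`{(p,q) ∈ S^{d−1} × S^{d−1} : L_p·p + L_q·q = b}` of the bivalued snout map is
homeomorphic to the sphere `S^{d−2}`, i.e. the unit sphere of `ℝ^{d−1}`. -/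
theorem bivalued_fiber_homeo_sphere (d : ℕ) (hd : 2 ≤ d)
    (Lp Lq : ℝ) (hLp : 0 < Lp) (hLq : 0 < Lq)
    (b : EuclideanSpace ℝ (Fin d)) (h1 : |Lp - Lq| < ‖b‖) (h2 : ‖b‖ < Lp + Lq) :
    Nonempty
      (({pq : EuclideanSpace ℝ (Fin d) × EuclideanSpace ℝ (Fin d) |
          ‖pq.1‖ = 1 ∧ ‖pq.2‖ = 1 ∧ Lp • pq.1 + Lq • pq.2 = b} :
            Set (EuclideanSpace ℝ (Fin d) × EuclideanSpace ℝ (Fin d))) ≃ₜ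
        Metric.sphere (0 : EuclideanSpace ℝ (Fin (d - 1))) 1) := by
  have hbnorm : 0 < ‖b‖ := lt_of_le_of_lt (abs_nonneg _) h1
  have hb : b ≠ 0 := by simpa using hbnorm.ne'
  set c : ℝ := (‖b‖^2 + Lp^2 - Lq^2) / (2*Lp) with hc
  have habs := abs_lt.mp h1
  have ha : (Lp - Lq)^2 < ‖b‖^2 := sq_lt_sq' habs.1 habs.2
  have hbb : ‖b‖^2 < (Lp + Lq)^2 := by nlinarith [norm_nonneg b]
  have hc2 : c^2 < ‖b‖^2 := by
    have hcc : c^2 = (‖b‖^2 + Lp^2 - Lq^2)^2 / (2*Lp)^2 := by rw [hc, div_pow]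
    rw [hcc, div_lt_iff₀ (by positivity)]
    nlinarith [mul_pos (sub_pos.mpr hbb) (sub_pos.mpr ha)]
  set r : ℝ := Real.sqrt (1 - c^2/‖b‖^2) with hrdef
  have hr2 : 0 < 1 - c^2/‖b‖^2 := by
    have : c^2/‖b‖^2 < 1 := by rw [div_lt_one (by positivity)]; exact hc2
    linarith
  have hr : 0 < r := Real.sqrt_pos.mpr hr2
  have hrsq : r^2 = 1 - c^2/‖b‖^2 := Real.sq_sqrt hr2.le
  set m : EuclideanSpace ℝ (Fin d) := (c/‖b‖^2) • b with hm
  set K : Submodule ℝ (EuclideanSpace ℝ (Fin d)) := (Submodule.span ℝ {b})ᗮ with hK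
  have hbm : ⟪b, m⟫ = c := by
    rw [hm, real_inner_smul_right, real_inner_self_eq_norm_sq]
    field_simp
  have hm2 : ‖m‖^2 = c^2/‖b‖^2 := by
    rw [hm, norm_smul, mul_pow, Real.norm_eq_abs, sq_abs, div_pow]
    field_simp
  have hinner_m : ∀ p : EuclideanSpace ℝ (Fin d), p - m ∈ K → ⟪m, p - m⟫ = 0 := by
    intro p hp
    have hmem : m ∈ Submodule.span ℝ {b} :=
      Submodule.smul_mem _ _ (Submodule.mem_span_singleton_self b)
    exact (Submodule.mem_orthogonal _ _).mp hp m hmem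
  have hnorm_split : ∀ p : EuclideanSpace ℝ (Fin d), p - m ∈ K →
      ‖p‖^2 = ‖m‖^2 + ‖p - m‖^2 := by
    intro p hp
    have hpm : p = m + (p - m) := by abel
    calc ‖p‖^2 = ‖m + (p - m)‖^2 := by rw [← hpm]
      _ = ‖m‖^2 + 2*⟪m, p - m⟫ + ‖p - m‖^2 := norm_add_sq_real m (p - m)
      _ = ‖m‖^2 + ‖p - m‖^2 := by rw [hinner_m p hp]; ring
  clear_value c r m K
  set A : Set (EuclideanSpace ℝ (Fin d)) := {p | ‖p‖ = 1 ∧ ⟪b, p⟫ = c} with hA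
  have key1 : ∀ p : EuclideanSpace ℝ (Fin d), ‖p‖ = 1 →
      ‖b - Lp • p‖^2 = ‖b‖^2 - 2*Lp*⟪b,p⟫ + Lp^2 := by
    intro p hp
    rw [norm_sub_sq_real, real_inner_smul_right, norm_smul, Real.norm_eq_abs,
      abs_of_pos hLp, hp]
    ring
  have e1 : ({pq : EuclideanSpace ℝ (Fin d) × EuclideanSpace ℝ (Fin d) |
      ‖pq.1‖ = 1 ∧ ‖pq.2‖ = 1 ∧ Lp • pq.1 + Lq • pq.2 = b} :
        Set (EuclideanSpace ℝ (Fin d) × EuclideanSpace ℝ (Fin d))) ≃ₜ A := {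
    toFun := fun x => ⟨x.1.1, by
      obtain ⟨hp, hq, heq⟩ := x.2
      refine ⟨hp, ?_⟩
      have hsub : b - Lp • x.1.1 = Lq • x.1.2 := (eq_sub_of_add_eq' heq).symm
      have hn : ‖b - Lp • x.1.1‖ = Lq := by
        rw [hsub, norm_smul, Real.norm_eq_abs, abs_of_pos hLq, hq, mul_one]
      have hkey := key1 x.1.1 hp
      rw [hn] at hkey
      rw [hc, eq_div_iff (by positivity)]
      nlinarith [hkey]⟩
    invFun := fun p => ⟨(p.1, Lq⁻¹ • (b - Lp • p.1)), by
      obtain ⟨hp, hip⟩ := p.2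
      have hsq : ‖b - Lp • (p:EuclideanSpace ℝ (Fin d))‖^2 = Lq^2 := by
        rw [key1 p.1 hp, hip, hc]
        field_simp
        ring
      have hn : ‖b - Lp • (p:EuclideanSpace ℝ (Fin d))‖ = Lq := by
        have h := congrArg Real.sqrt hsq
        rwa [Real.sqrt_sq (norm_nonneg _), Real.sqrt_sq hLq.le] at h
      refine ⟨hp, ?_, ?_⟩
      · show ‖Lq⁻¹ • (b - Lp • (p:EuclideanSpace ℝ (Fin d)))‖ = 1
        rw [norm_smul, Real.norm_eq_abs, abs_of_pos (inv_pos.mpr hLq), hn]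
        field_simp
      · show Lp • (p:EuclideanSpace ℝ (Fin d)) + Lq • Lq⁻¹ • (b - Lp • (p:EuclideanSpace ℝ (Fin d))) = b
        rw [smul_inv_smul₀ hLq.ne']
        abel⟩
    left_inv := fun x => by
      obtain ⟨hp, hq, heq⟩ := x.2
      ext : 2
      · rfl
      · show Lq⁻¹ • (b - Lp • x.1.1) = x.1.2
        have hsub : b - Lp • x.1.1 = Lq • x.1.2 := (eq_sub_of_add_eq' heq).symm
        rw [hsub, inv_smul_smul₀ hLq.ne']
    right_inv := fun p => rfl
    continuous_toFun := by exact (continuous_fst.comp continuous_subtype_val).subtype_mk _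
    continuous_invFun := by
      apply Continuous.subtype_mk
      exact (continuous_subtype_val).prodMk
        (by fun_prop) }
  have memK_iff : ∀ p : EuclideanSpace ℝ (Fin d), (p - m ∈ K ↔ ⟪b, p⟫ = c) := by
    intro p
    rw [hK, Submodule.mem_orthogonal_singleton_iff_inner_right, inner_sub_right, hbm,
      sub_eq_zero]
  have normr_iff : ∀ p : EuclideanSpace ℝ (Fin d), p - m ∈ K → (‖p‖ = 1 ↔ ‖p - m‖ = r) := by
    intro p hp
    have hsplit := hnorm_split p hp
    constructor
    · intro h
      have hq : ‖p - m‖^2 = r^2 := by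
        rw [hrsq, ← hm2]
        nlinarith [hsplit]
      nlinarith [norm_nonneg (p - m), hr]
    · intro h
      have hone : ‖p‖^2 = 1 := by rw [hsplit, h, hrsq, hm2]; ring
      nlinarith [norm_nonneg p]
  have e2 : A ≃ₜ Metric.sphere (0:K) r := {
    toFun := fun p => ⟨⟨(p:EuclideanSpace ℝ (Fin d)) - m, (memK_iff p.1).mpr p.2.2⟩, by
      rw [mem_sphere_zero_iff_norm]
      exact (normr_iff p.1 ((memK_iff p.1).mpr p.2.2)).mp p.2.1⟩
    invFun := fun w => ⟨m + ((w:K):EuclideanSpace ℝ (Fin d)), by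
      have hmem : ((w:K):EuclideanSpace ℝ (Fin d)) ∈ K := (w:K).2
      have hK' : (m + ((w:K):EuclideanSpace ℝ (Fin d))) - m ∈ K := by simpa using hmem
      have hn : ‖((w:K):EuclideanSpace ℝ (Fin d))‖ = r := mem_sphere_zero_iff_norm.mp w.2
      refine ⟨?_, (memK_iff _).mp hK'⟩
      rw [normr_iff _ hK']
      simpa using hn⟩
    left_inv := fun p => by ext; simp
    right_inv := fun w => by ext; simp
    continuous_toFun := by
      exact Continuous.subtype_mk
        (Continuous.subtype_mk (continuous_subtype_val.sub continuous_const) _) _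
    continuous_invFun := by
      exact Continuous.subtype_mk
        (continuous_const.add ((continuous_subtype_val).comp continuous_subtype_val)) _ }
  have hrank : Module.finrank ℝ K = d - 1 := by
    have hs : Module.finrank ℝ (Submodule.span ℝ {b}) = 1 := finrank_span_singleton hb
    have hsum := Submodule.finrank_add_finrank_orthogonal (Submodule.span ℝ {b})
    rw [hs, finrank_euclideanSpace_fin, ← hK] at hsum
    omega
  have e4 : K ≃ₗᵢ[ℝ] EuclideanSpace ℝ (Fin (d-1)) :=
    ((stdOrthonormalBasis ℝ K).reindex (finCongr hrank)).repr
  exact ⟨e1.trans (e2.trans ((sphereScaleHomeo hr).trans (sphereLIHomeo e4 1)))⟩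

end
end

section
/- Let v ∈ ℝ^d be nonzero (d ≥ 2), let u = v/‖v‖, and let φ_u denote the stereographic projection from the pole u (a homeomorphism from the unit sphere minus {u} onto (ℝ·u)^⊥ sending −u to 0). For x on the sphere with x ≠ u, define the curve c : ℝ → ℝ^d by c(t) = φ_u⁻¹(e^{t‖v‖} · φ_u(x)) (regarded as a point of ℝ^d). Then c is differentiable at t = 0 and c′(0) = v − ⟨x, v⟩·x. (This also holds trivially at x = u with the constant curve.) In other words, the flow Γ^v_t on the sphere is the flow of the vector field x ↦ v − ⟨x,v⟩x, which is the spherical gradient of x ↦ ⟨x, v⟩. -/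
open Metric

/-- The flow `Γ^v_t = φ_u⁻¹ ∘ (eᵗ‖v‖ ·) ∘ φ_u` (with `u = v/‖v‖` and `φ_u` the
stereographic projection from the pole `u`) is the flow of the vector field
`x ↦ v − ⟨x,v⟩x`, the spherical gradient of `x ↦ ⟨x, v⟩`: the curve
`c(t) = Γ^v_t(x)`, viewed in `ℝ^d`, has derivative `v − ⟨x,v⟩x` at `t = 0`. -/
theorem mobiusFlow_deriv (d : ℕ) (hd : 2 ≤ d)
    (v : EuclideanSpace ℝ (Fin d)) (hv : v ≠ 0)
    (u : sphere (0 : EuclideanSpace ℝ (Fin d)) 1)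
    (hu : (u : EuclideanSpace ℝ (Fin d)) = ‖v‖⁻¹ • v)
    (x : sphere (0 : EuclideanSpace ℝ (Fin d)) 1) (hx : x ≠ u) :
    HasDerivAt
      (fun t : ℝ =>
        (((stereographic (norm_eq_of_mem_sphere u)).symm
            (Real.exp (t * ‖v‖) • stereographic (norm_eq_of_mem_sphere u) x) :
          sphere (0 : EuclideanSpace ℝ (Fin d)) 1) : EuclideanSpace ℝ (Fin d)))
      (v - (inner ℝ (x : EuclideanSpace ℝ (Fin d)) v : ℝ) • (x : EuclideanSpace ℝ (Fin d)))
      0 := by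
  have hu1 : ‖(u : EuclideanSpace ℝ (Fin d))‖ = 1 := norm_eq_of_mem_sphere u
  obtain ⟨y, hy⟩ : ∃ y, y = stereographic (norm_eq_of_mem_sphere u) x := ⟨_, rfl⟩
  obtain ⟨U, hU⟩ : ∃ U, U = (u : EuclideanSpace ℝ (Fin d)) := ⟨_, rfl⟩
  obtain ⟨Y, hYd⟩ : ∃ Y, Y = (y : EuclideanSpace ℝ (Fin d)) := ⟨_, rfl⟩
  obtain ⟨a, had⟩ : ∃ a, a = ‖Y‖ ^ 2 := ⟨_, rfl⟩
  have ha0 : (0:ℝ) ≤ a := had ▸ sq_nonneg _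
  have ha4 : a + 4 ≠ 0 := by positivity
  -- the curve written explicitly
  have hsymm : ∀ w : (ℝ ∙ (u : EuclideanSpace ℝ (Fin d)))ᗮ,
      (((stereographic (norm_eq_of_mem_sphere u)).symm w :
        sphere (0 : EuclideanSpace ℝ (Fin d)) 1) : EuclideanSpace ℝ (Fin d))
        = (‖(w : EuclideanSpace ℝ (Fin d))‖ ^ 2 + 4)⁻¹ •
            ((4 : ℝ) • (w : EuclideanSpace ℝ (Fin d))
              + (‖(w : EuclideanSpace ℝ (Fin d))‖ ^ 2 - 4) • (u : EuclideanSpace ℝ (Fin d))) :=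
    fun w => rfl
  have hfun : (fun t : ℝ =>
      (((stereographic (norm_eq_of_mem_sphere u)).symm
          (Real.exp (t * ‖v‖) • stereographic (norm_eq_of_mem_sphere u) x) :
        sphere (0 : EuclideanSpace ℝ (Fin d)) 1) : EuclideanSpace ℝ (Fin d)))
      = fun t : ℝ => (Real.exp (t * ‖v‖) ^ 2 * a + 4)⁻¹ •
          ((4 * Real.exp (t * ‖v‖)) • Y + (Real.exp (t * ‖v‖) ^ 2 * a - 4) • U) := by
    funext t
    rw [hsymm, ← hy]
    have hcoe : ((Real.exp (t * ‖v‖) • y : (ℝ ∙ (u : EuclideanSpace ℝ (Fin d)))ᗮ) :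
        EuclideanSpace ℝ (Fin d)) = Real.exp (t * ‖v‖) • Y := by rw [hYd]; rfl
    have hnorm : ‖Real.exp (t * ‖v‖) • Y‖ ^ 2 = Real.exp (t * ‖v‖) ^ 2 * a := by
      rw [norm_smul, Real.norm_eq_abs, abs_of_pos (Real.exp_pos _), mul_pow, had]
    rw [hcoe, hnorm, ← hU, smul_smul, mul_comm (4:ℝ) (Real.exp (t * ‖v‖))]
  rw [hfun]
  -- derivative of the scalar pieces
  have hs : HasDerivAt (fun t : ℝ => Real.exp (t * ‖v‖)) ‖v‖ 0 := by
    have := ((hasDerivAt_id (0:ℝ)).mul_const ‖v‖).exp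
    simpa using this
  have hinv : HasDerivAt (fun t : ℝ => (Real.exp (t * ‖v‖) ^ 2 * a + 4)⁻¹)
      (-(2 * ‖v‖ * a) / (a + 4) ^ 2) 0 := by
    have h1 := (((hs.pow 2).mul_const a).add_const 4).inv (x := (0:ℝ)) (by simpa using ha4)
    rw [show Real.exp ((0:ℝ) * ‖v‖) = 1 by simp] at h1
    convert h1 using 1 <;> first | rfl | (simp only [Pi.pow_apply, zero_mul, Real.exp_zero, one_pow]; ring_nf)
  have h2 : HasDerivAt (fun t : ℝ => (4 * Real.exp (t * ‖v‖)) • Y)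
      ((4 * ‖v‖) • Y) 0 := (hs.const_mul 4).smul_const Y
  have h3 : HasDerivAt (fun t : ℝ => (Real.exp (t * ‖v‖) ^ 2 * a - 4) • U)
      ((2 * ‖v‖ * a) • U) 0 := by
    have := (((hs.pow 2).mul_const a).sub_const 4).smul_const U
    rw [show Real.exp ((0:ℝ) * ‖v‖) = 1 by simp] at this
    convert this using 2
    all_goals first | rfl | ring
  have hD := hinv.smul (h2.add h3)
  -- identify x in terms of Y and U
  have hxsrc : x ∈ (stereographic (norm_eq_of_mem_sphere u)).source := by
    simp only [stereographic_source, Set.mem_compl_iff, Set.mem_singleton_iff]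
    exact fun h => hx (h.trans (Subtype.ext rfl))
  have hxy : (x : EuclideanSpace ℝ (Fin d)) = (a + 4)⁻¹ • ((4 : ℝ) • Y + (a - 4) • U) := by
    have h0 := (stereographic (norm_eq_of_mem_sphere u)).left_inv hxsrc
    have h := congrArg (Subtype.val) h0
    rw [hsymm] at h
    rw [← h, ← hy, ← hYd, ← had, ← hU]
  have hYU : (inner ℝ U Y : ℝ) = 0 := by
    rw [hU, hYd]
    exact Submodule.mem_orthogonal_singleton_iff_inner_right.mp y.2
  have hUU : (inner ℝ U U : ℝ) = 1 := by
    rw [real_inner_self_eq_norm_sq, hU, hu1]; norm_num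
  have hvU : v = ‖v‖ • U := by
    rw [hU, hu, smul_smul, mul_inv_cancel₀ (norm_ne_zero_iff.mpr hv), one_smul]
  have hvY : (inner ℝ Y v : ℝ) = 0 := by
    conv_lhs => rw [hvU]
    rw [real_inner_smul_right, real_inner_comm, hYU, mul_zero]
  have hUv : (inner ℝ U v : ℝ) = ‖v‖ := by
    conv_lhs => rw [hvU]
    rw [real_inner_smul_right, hUU, mul_one]
  have hxv : (inner ℝ (x : EuclideanSpace ℝ (Fin d)) v : ℝ)
      = ‖v‖ * ((a + 4)⁻¹ * (a - 4)) := by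
    rw [hxy, real_inner_smul_left, inner_add_left, real_inner_smul_left,
      real_inner_smul_left, hvY, hUv]
    ring
  convert hD using 1
  · rfl
  · rfl
  · rfl
  · rfl
  simp only [Pi.add_apply]
  rw [show Real.exp ((0:ℝ) * ‖v‖) = 1 by simp, hxv, hxy]
  nth_rewrite 1 [hvU]
  match_scalars
  · field_simp
    ring
  · field_simp
    ring
end

section
/- Let d ≥ 1, N ≥ 1, let a : Fin N → ℝ with a_i > 0 for all i, and let z : Fin N → ℝ^d with ‖z_i‖ = 1 for all i. Consider the set D = {∑_{i} a_i·v_i | v : Fin N → ℝ^d with ⟨v_i, z_i⟩ = 0 for all i}, a linear subspace of ℝ^d. Then D = ℝ^d if and only if z is not lined, i.e., if and only if there is no unit vector p with z_i ∈ {p, −p} for all i. -/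
/-- The image `D = {∑ aᵢ • vᵢ | ⟨vᵢ, zᵢ⟩ = 0 ∀i}` of the differential of the polygonal
snout map at `z` is all of `ℝ^d` if and only if `z` is not lined. -/
theorem polygonal_differential_surjective_iff_not_lined
    (d N : ℕ) (hd : 1 ≤ d) (hN : 1 ≤ N)
    (a : Fin N → ℝ) (ha : ∀ i, 0 < a i)
    (z : Fin N → EuclideanSpace ℝ (Fin d)) (hz : ∀ i, ‖z i‖ = 1) :
    {x : EuclideanSpace ℝ (Fin d) |
        ∃ v : Fin N → EuclideanSpace ℝ (Fin d),
          (∀ i, (inner ℝ (v i) (z i) : ℝ) = 0) ∧ x = ∑ i, a i • v i} = Set.univ ↔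
      ¬ ∃ p : EuclideanSpace ℝ (Fin d), ‖p‖ = 1 ∧ ∀ i, z i = p ∨ z i = -p := by
  classical
  constructor
  · rintro hD ⟨p, hp, hlin⟩
    obtain ⟨v, hv, hsum⟩ : p ∈ {x : EuclideanSpace ℝ (Fin d) |
        ∃ v : Fin N → EuclideanSpace ℝ (Fin d),
          (∀ i, (inner ℝ (v i) (z i) : ℝ) = 0) ∧ x = ∑ i, a i • v i} :=
      hD.symm.subset (Set.mem_univ p)
    have hvp : ∀ i, (inner ℝ (v i) p : ℝ) = 0 := by
      intro i
      rcases hlin i with h | h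
      · rw [← h]; exact hv i
      · have := hv i
        rw [h, inner_neg_right, neg_eq_zero] at this
        exact this
    have h0 : (inner ℝ p p : ℝ) = 0 := by
      nth_rewrite 1 [hsum]
      rw [sum_inner]
      apply Finset.sum_eq_zero
      intro i _
      rw [real_inner_smul_left, hvp i, mul_zero]
    rw [real_inner_self_eq_norm_sq, hp] at h0
    norm_num at h0
  · intro hnl
    ext x
    simp only [Set.mem_setOf_eq, Set.mem_univ, iff_true]
    set i0 : Fin N := ⟨0, hN⟩ with hi0
    obtain ⟨j, hj1, hj2⟩ : ∃ j, z j ≠ z i0 ∧ z j ≠ -(z i0) := by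
      by_contra h
      push_neg at h
      exact hnl ⟨z i0, hz i0, fun i => by
        by_cases hc : z i = z i0
        · exact Or.inl hc
        · exact Or.inr (h i hc)⟩
    have hji0 : j ≠ i0 := fun h => hj1 (by rw [h])
    -- the two orthogonal complements span everything
    have hinf : (ℝ ∙ z i0) ⊓ (ℝ ∙ z j) = ⊥ := by
      rw [Submodule.eq_bot_iff]
      intro y hy
      rw [Submodule.mem_inf] at hy
      obtain ⟨hy1, hy2⟩ := hy
      rw [Submodule.mem_span_singleton] at hy1 hy2
      obtain ⟨c, rfl⟩ := hy1
      obtain ⟨e, he⟩ := hy2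
      by_contra hy0
      have hc : c ≠ 0 := by rintro rfl; simp at hy0
      have he0 : e ≠ 0 := by
        rintro rfl
        rw [zero_smul] at he
        exact hy0 he.symm
      have hzj : z j = (e⁻¹ * c) • z i0 := by
        have := congrArg (fun y => e⁻¹ • y) he
        simpa [smul_smul, he0] using this
      have hnorm : |e⁻¹ * c| = 1 := by
        have := congrArg norm hzj
        rw [norm_smul, hz j, hz i0, Real.norm_eq_abs, mul_one] at this
        exact this.symm
      rcases ((abs_eq (zero_le_one)).mp hnorm) with h | h
      · exact hj1 (by rw [hzj, h, one_smul])
      · exact hj2 (by rw [hzj, h, neg_one_smul])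
    have h1 : ((ℝ ∙ z i0)ᗮ ⊔ (ℝ ∙ z j)ᗮ)ᗮ = ⊥ := by
      rw [← Submodule.inf_orthogonal, Submodule.orthogonal_orthogonal,
        Submodule.orthogonal_orthogonal, hinf]
    have hsup : (ℝ ∙ z i0)ᗮ ⊔ (ℝ ∙ z j)ᗮ = ⊤ := by
      have := congrArg Submodule.orthogonal h1
      rwa [Submodule.orthogonal_orthogonal, Submodule.bot_orthogonal_eq_top] at this
    have hx : x ∈ (ℝ ∙ z i0)ᗮ ⊔ (ℝ ∙ z j)ᗮ := hsup ▸ Submodule.mem_top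
    rw [Submodule.mem_sup] at hx
    obtain ⟨u, hu, w, hw, huw⟩ := hx
    refine ⟨fun i => if i = i0 then (a i0)⁻¹ • u else if i = j then (a j)⁻¹ • w else 0, ?_, ?_⟩
    · intro i
      beta_reduce
      have hu' : (inner ℝ u (z i0) : ℝ) = 0 := by
        rw [real_inner_comm]
        exact Submodule.mem_orthogonal_singleton_iff_inner_right.mp hu
      have hw' : (inner ℝ w (z j) : ℝ) = 0 := by
        rw [real_inner_comm]
        exact Submodule.mem_orthogonal_singleton_iff_inner_right.mp hw
      by_cases h1' : i = i0
      · rw [if_pos h1', real_inner_smul_left, h1', hu', mul_zero]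
      · by_cases h2' : i = j
        · rw [if_neg h1', if_pos h2', real_inner_smul_left, h2', hw', mul_zero]
        · rw [if_neg h1', if_neg h2', inner_zero_left]
    · have hcongr : ∀ i ∈ Finset.univ, a i • (if i = i0 then (a i0)⁻¹ • u
          else if i = j then (a j)⁻¹ • w else 0)
          = (if i = i0 then u else 0) + (if i = j then w else 0) := by
        intro i _
        by_cases h1' : i = i0
        · have hij : ¬ i = j := fun h => hji0 (h.symm.trans h1')
          rw [if_pos h1', if_pos h1', if_neg hij, add_zero, h1', smul_smul,
            mul_inv_cancel₀ (ha i0).ne', one_smul]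
        · by_cases h2' : i = j
          · rw [if_neg h1', if_pos h2', if_neg h1', if_pos h2', zero_add, h2', smul_smul,
              mul_inv_cancel₀ (ha j).ne', one_smul]
          · rw [if_neg h1', if_neg h2', if_neg h1', if_neg h2', smul_zero, add_zero]
      rw [Finset.sum_congr rfl hcongr, Finset.sum_add_distrib,
        Finset.sum_ite_eq' Finset.univ i0 (fun _ => u),
        Finset.sum_ite_eq' Finset.univ j (fun _ => w),
        if_pos (Finset.mem_univ _), if_pos (Finset.mem_univ _), huw]
end

section
/- Let d ≥ 1, N ≥ 1, let a : Fin N → ℝ with a_i > 0 for all i, let p ∈ ℝ^d with ‖p‖ = 1, and let z : Fin N → ℝ^d with z_i ∈ {p, −p} for all i (a lined polygonal configuration). Then the linear subspace D = {∑_i a_i·v_i | v : Fin N → ℝ^d with ⟨v_i, z_i⟩ = 0 for all i} equals the orthogonal complement (ℝ·p)^⊥; in particular D has dimension d − 1. -/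
/-- At a lined polygonal configuration (`zᵢ ∈ {p, −p}` for all `i`), the image
`D = {∑ aᵢ • vᵢ | ⟨vᵢ, zᵢ⟩ = 0 ∀i}` of the differential of the snout map equals the
orthogonal complement `(ℝ·p)ᗮ`; in particular it has dimension `d − 1`. -/
theorem polygonal_differential_at_lined
    (d N : ℕ) (hd : 1 ≤ d) (hN : 1 ≤ N)
    (a : Fin N → ℝ) (ha : ∀ i, 0 < a i)
    (p : EuclideanSpace ℝ (Fin d)) (hp : ‖p‖ = 1)
    (z : Fin N → EuclideanSpace ℝ (Fin d)) (hz : ∀ i, z i = p ∨ z i = -p) :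
    {x : EuclideanSpace ℝ (Fin d) |
        ∃ v : Fin N → EuclideanSpace ℝ (Fin d),
          (∀ i, (inner ℝ (v i) (z i) : ℝ) = 0) ∧ x = ∑ i, a i • v i} =
      ((Submodule.span ℝ {p})ᗮ : Set (EuclideanSpace ℝ (Fin d))) ∧
    Module.finrank ℝ ((Submodule.span ℝ {p})ᗮ :
        Submodule ℝ (EuclideanSpace ℝ (Fin d))) = d - 1 := by
  have hp0 : p ≠ 0 := by
    intro h; rw [h, norm_zero] at hp; norm_num at hp
  constructor
  · ext x
    simp only [Set.mem_setOf_eq, SetLike.mem_coe]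
    constructor
    · rintro ⟨v, hv, rfl⟩
      have hvp : ∀ i, (inner ℝ (v i) p : ℝ) = 0 := by
        intro i
        rcases hz i with h | h
        · rw [← h]; exact hv i
        · have := hv i
          rw [h, inner_neg_right] at this
          linarith
      rw [Submodule.mem_orthogonal_singleton_iff_inner_left, sum_inner]
      simp [inner_smul_left, hvp]
    · intro hx
      have hxp : (inner ℝ x p : ℝ) = 0 :=
        (Submodule.mem_orthogonal_singleton_iff_inner_left).mp hx
      set i₀ : Fin N := ⟨0, hN⟩
      refine ⟨fun i => if i = i₀ then (a i₀)⁻¹ • x else 0, ?_, ?_⟩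
      · intro i
        by_cases h : i = i₀
        · simp only [h, if_pos rfl]
          rcases hz i₀ with hzz | hzz <;>
            simp [hzz, inner_smul_left, inner_neg_right, hxp]
        · simp [h]
      · rw [Finset.sum_eq_single i₀]
        · simp [smul_smul, mul_inv_cancel₀ (ne_of_gt (ha i₀))]
        · intro b _ hb; simp [hb]
        · intro h; exact absurd (Finset.mem_univ i₀) h
  · have h1 : Module.finrank ℝ (Submodule.span ℝ ({p} : Set (EuclideanSpace ℝ (Fin d)))) = 1 :=
      finrank_span_singleton hp0
    have h2 := Submodule.finrank_add_finrank_orthogonal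
      (K := Submodule.span ℝ ({p} : Set (EuclideanSpace ℝ (Fin d))))
    rw [h1] at h2
    have h3 : Module.finrank ℝ (EuclideanSpace ℝ (Fin d)) = d := by
      simp
    omega
end
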